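/- arXiv:2106.02046 — 2 statements merged into one kernel-verified Lean document; each statement's English description precedes it below -/
import Mathlib

section
/- Let P_n be orthonormal polynomials of a compactly supported probability measure μ with recurrence coefficients b_n → b > 0. Then for every continuous bounded function f on ℝ, lim_{n→∞} ∫ f(ω) P_n(ω)² dμ(ω) = (1/π) ∫_{−2b}^{2b} f(ω)/√(4b² − ω²) dω. -/
open MeasureTheory Polynomial Real intervalIntegral

noncomputable def Aw (k : ℕ) (d : ℤ) : ℝ :=
  (1 / Real.pi) * ∫ θ in (0:ℝ)..Real.pi, (2 * Real.cos θ) ^ k * Real.cos (d * θ)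

lemma Aw_zero (d : ℤ) : Aw 0 d = if d = 0 then 1 else 0 := by
  unfold Aw
  rcases eq_or_ne d 0 with h | h
  · simp [h, Real.pi_ne_zero]
  · have hd : (d : ℝ) ≠ 0 := Int.cast_ne_zero.mpr h
    have : ∫ θ in (0:ℝ)..Real.pi, (2 * Real.cos θ) ^ 0 * Real.cos (d * θ)
        = ∫ θ in (0:ℝ)..Real.pi, Real.cos (d * θ) := by
      simp
    rw [this, intervalIntegral.integral_comp_mul_left _ hd]
    simp [integral_cos, Real.sin_int_mul_pi, h]

lemma Aw_rec (k : ℕ) (d : ℤ) : Aw (k + 1) d = Aw k (d + 1) + Aw k (d - 1) := by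
  unfold Aw
  rw [← mul_add, ← intervalIntegral.integral_add]
  · congr 1
    apply intervalIntegral.integral_congr
    intro θ _
    have key : Real.cos (((d : ℝ) + 1) * θ) + Real.cos (((d : ℝ) - 1) * θ)
        = 2 * Real.cos θ * Real.cos (d * θ) := by
      rw [add_mul, sub_mul, one_mul, Real.cos_add, Real.cos_sub]
      ring
    simp only [Int.cast_add, Int.cast_sub, Int.cast_one, pow_succ, ← mul_add, key]
    ring
  · exact (Continuous.intervalIntegrable (by continuity) _ _)
  · exact (Continuous.intervalIntegrable (by continuity) _ _)

lemma image_cos_Ioo (bb : ℝ) (hbb : 0 < bb) :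
    (fun θ => 2 * bb * Real.cos θ) '' Set.Ioo 0 Real.pi = Set.Ioo (-(2 * bb)) (2 * bb) := by
  ext y
  constructor
  · rintro ⟨θ, hθ, rfl⟩
    have h1 : Real.cos θ < 1 := by
      have := Real.strictAntiOn_cos (Set.left_mem_Icc.2 Real.pi_pos.le)
        ⟨hθ.1.le, hθ.2.le⟩ hθ.1
      simpa using this
    have h2 : -1 < Real.cos θ := by
      have := Real.strictAntiOn_cos ⟨hθ.1.le, hθ.2.le⟩
        (Set.right_mem_Icc.2 Real.pi_pos.le) hθ.2
      simpa using this
    simp only []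
    constructor <;> nlinarith
  · rintro ⟨h1, h2⟩
    have hy : y / (2 * bb) ∈ Set.Icc (-1 : ℝ) 1 := by
      constructor
      · rw [le_div_iff₀ (by linarith)]; linarith
      · rw [div_le_iff₀ (by linarith)]; linarith
    obtain ⟨θ, hθ, hcos⟩ := Real.surjOn_cos hy
    refine ⟨θ, ⟨?_, ?_⟩, ?_⟩
    · rcases lt_or_eq_of_le hθ.1 with h | h
      · exact h
      · exfalso
        rw [← h, Real.cos_zero] at hcos
        have h2b : (2:ℝ) * bb ≠ 0 := by positivity
        field_simp at hcos
        linarith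
    · rcases lt_or_eq_of_le hθ.2 with h | h
      · exact h
      · exfalso
        rw [h, Real.cos_pi] at hcos
        have h2b : (2:ℝ) * bb ≠ 0 := by positivity
        field_simp at hcos
        linarith
    · show 2 * bb * Real.cos θ = y
      rw [hcos]
      field_simp

lemma cov_arcsine (bb : ℝ) (hbb : 0 < bb) (f : ℝ → ℝ) :
    ∫ ω in Set.Ioo (-(2 * bb)) (2 * bb), f ω / Real.sqrt (4 * bb ^ 2 - ω ^ 2)
      = ∫ θ in (0:ℝ)..Real.pi, f (2 * bb * Real.cos θ) := by
  have himg := image_cos_Ioo bb hbb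
  have hderiv : ∀ θ ∈ Set.Ioo (0:ℝ) Real.pi,
      HasDerivWithinAt (fun θ => 2 * bb * Real.cos θ) (2 * bb * (-Real.sin θ))
        (Set.Ioo 0 Real.pi) θ := by
    intro θ _
    exact ((Real.hasDerivAt_cos θ).const_mul (2 * bb)).hasDerivWithinAt
  have hinj : Set.InjOn (fun θ => 2 * bb * Real.cos θ) (Set.Ioo 0 Real.pi) := by
    intro x hx y hy hxy
    have : Real.cos x = Real.cos y :=
      mul_left_cancel₀ (show (2*bb) ≠ 0 by positivity) hxy
    exact Real.injOn_cos ⟨hx.1.le, hx.2.le⟩ ⟨hy.1.le, hy.2.le⟩ this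
  rw [← himg, integral_image_eq_integral_abs_deriv_smul measurableSet_Ioo hderiv hinj]
  rw [intervalIntegral.integral_of_le Real.pi_pos.le, MeasureTheory.integral_Ioc_eq_integral_Ioo]
  apply MeasureTheory.setIntegral_congr_fun measurableSet_Ioo
  intro θ hθ
  have hs : 0 < Real.sin θ := Real.sin_pos_of_pos_of_lt_pi hθ.1 hθ.2
  have hsqrt : Real.sqrt (4 * bb ^ 2 - (2 * bb * Real.cos θ) ^ 2) = 2 * bb * Real.sin θ := by
    have : 4 * bb ^ 2 - (2 * bb * Real.cos θ) ^ 2 = (2 * bb * Real.sin θ) ^ 2 := by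
      have := Real.sin_sq_add_cos_sq θ
      nlinarith
    rw [this, Real.sqrt_sq (by positivity)]
  simp only [smul_eq_mul, hsqrt]
  rw [abs_of_nonpos (by nlinarith), mul_comm]
  field_simp

lemma integrable_of_cont (μ : Measure ℝ) [IsProbabilityMeasure μ]
    (c : ℝ) (hsupp : μ (Set.Icc (-c) c)ᶜ = 0) (g : ℝ → ℝ) (hg : Continuous g) :
    Integrable g μ := by
  obtain ⟨C, hC⟩ := (isCompact_Icc : IsCompact (Set.Icc (-c) c)).exists_bound_of_continuousOn
    hg.continuousOn
  apply MeasureTheory.Integrable.mono' (integrable_const C) hg.aestronglyMeasurable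
  rw [MeasureTheory.ae_iff]
  apply measure_mono_null _ hsupp
  intro x hx
  simp only [Set.mem_setOf_eq, not_le] at hx
  simp only [Set.mem_compl_iff]
  intro hmem
  exact absurd (hC x hmem) (not_le.mpr hx)

lemma tendsto_toNat_atTop (d : ℤ) :
    Filter.Tendsto (fun n : ℕ => ((n : ℤ) + d).toNat) Filter.atTop Filter.atTop := by
  apply Filter.tendsto_atTop_atTop.mpr
  intro B
  exact ⟨B + d.natAbs, fun n hn => by omega⟩

lemma Tlim (μ : Measure ℝ) [IsProbabilityMeasure μ]
    (c : ℝ) (hsupp : μ (Set.Icc (-c) c)ᶜ = 0)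
    (P : ℕ → Polynomial ℝ) (b : ℕ → ℝ)
    (horth : ∀ n m, ∫ ω, (P n).eval ω * (P m).eval ω ∂μ = if n = m then 1 else 0)
    (hrec : ∀ n, 1 ≤ n → ∀ ω : ℝ,
      ω * (P n).eval ω = b (n + 1) * (P (n + 1)).eval ω + b n * (P (n - 1)).eval ω)
    (bb : ℝ) (hlim : Filter.Tendsto b Filter.atTop (nhds bb)) :
    ∀ (k : ℕ) (d : ℤ), Filter.Tendsto
      (fun n : ℕ => ∫ ω, ω ^ k * ((P ((n : ℤ) + d).toNat).eval ω * (P n).eval ω) ∂μ)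
      Filter.atTop (nhds (bb ^ k * Aw k d)) := by
  have hint : ∀ g : ℝ → ℝ, Continuous g → Integrable g μ := integrable_of_cont μ c hsupp
  intro k
  induction k with
  | zero =>
    intro d
    have heq : ∀ n : ℕ, ∫ ω, ω ^ 0 * ((P ((n : ℤ) + d).toNat).eval ω * (P n).eval ω) ∂μ
        = if ((n : ℤ) + d).toNat = n then (1:ℝ) else 0 := by
      intro n
      rw [← horth]
      simp
    rcases eq_or_ne d 0 with rfl | hd
    · have : ∀ n : ℕ, ∫ ω, ω ^ 0 * ((P ((n : ℤ) + 0).toNat).eval ω * (P n).eval ω) ∂μ = 1 := by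
        intro n; rw [heq]; simp
      rw [show bb ^ 0 * Aw 0 0 = 1 by rw [Aw_zero]; simp]
      simp only [this]
      exact tendsto_const_nhds
    · rw [show bb ^ 0 * Aw 0 d = 0 by rw [Aw_zero]; simp [hd]]
      apply Filter.Tendsto.congr' _ tendsto_const_nhds
      filter_upwards [Filter.eventually_ge_atTop (d.natAbs + 1)] with n hn
      rw [heq, if_neg (by omega)]
  | succ k ih =>
    intro d
    have hb1 : Filter.Tendsto (fun n : ℕ => b (((n : ℤ) + d).toNat + 1)) Filter.atTop (nhds bb) := by
      apply hlim.comp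
      apply Filter.tendsto_atTop_atTop.mpr
      intro B
      exact ⟨B + d.natAbs, fun n hn => by omega⟩
    have hb0 : Filter.Tendsto (fun n : ℕ => b (((n : ℤ) + d).toNat)) Filter.atTop (nhds bb) :=
      hlim.comp (tendsto_toNat_atTop d)
    have main : Filter.Tendsto
        (fun n : ℕ => b (((n : ℤ) + d).toNat + 1)
            * ∫ ω, ω ^ k * ((P ((n : ℤ) + (d+1)).toNat).eval ω * (P n).eval ω) ∂μ
          + b (((n : ℤ) + d).toNat)
            * ∫ ω, ω ^ k * ((P ((n : ℤ) + (d-1)).toNat).eval ω * (P n).eval ω) ∂μ)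
        Filter.atTop (nhds (bb * (bb ^ k * Aw k (d+1)) + bb * (bb ^ k * Aw k (d-1)))) :=
      (hb1.mul (ih (d+1))).add (hb0.mul (ih (d-1)))
    have hval : bb * (bb ^ k * Aw k (d+1)) + bb * (bb ^ k * Aw k (d-1))
        = bb ^ (k+1) * Aw (k+1) d := by
      rw [Aw_rec, pow_succ]
      ring
    rw [← hval]
    apply Filter.Tendsto.congr' _ main
    filter_upwards [Filter.eventually_ge_atTop (d.natAbs + 1)] with n hn
    have hp1 : 1 ≤ ((n : ℤ) + d).toNat := by omega
    set p := ((n : ℤ) + d).toNat with hp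
    have e1 : ((n : ℤ) + (d+1)).toNat = p + 1 := by omega
    have e2 : ((n : ℤ) + (d-1)).toNat = p - 1 := by omega
    rw [e1, e2]
    have hintegrand : ∀ ω : ℝ,
        b (p+1) * (ω ^ k * ((P (p+1)).eval ω * (P n).eval ω))
          + b p * (ω ^ k * ((P (p-1)).eval ω * (P n).eval ω))
        = ω ^ (k+1) * ((P p).eval ω * (P n).eval ω) := by
      intro ω
      have := hrec p hp1 ω
      calc b (p+1) * (ω ^ k * ((P (p+1)).eval ω * (P n).eval ω))
            + b p * (ω ^ k * ((P (p-1)).eval ω * (P n).eval ω))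
          = ω ^ k * ((b (p+1) * (P (p+1)).eval ω + b p * (P (p-1)).eval ω) * (P n).eval ω) := by
            ring
        _ = ω ^ k * ((ω * (P p).eval ω) * (P n).eval ω) := by rw [← this]
        _ = ω ^ (k+1) * ((P p).eval ω * (P n).eval ω) := by ring
    rw [← MeasureTheory.integral_const_mul, ← MeasureTheory.integral_const_mul,
      ← MeasureTheory.integral_add]
    · exact integral_congr_ae (Filter.Eventually.of_forall hintegrand)
    · exact ((hint _ ((continuous_pow k).mul (((P (p+1)).continuous).mul
        ((P n).continuous)))).const_mul _)
    · exact ((hint _ ((continuous_pow k).mul (((P (p-1)).continuous).mul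
        ((P n).continuous)))).const_mul _)

lemma Plim (μ : Measure ℝ) [IsProbabilityMeasure μ]
    (c : ℝ) (hsupp : μ (Set.Icc (-c) c)ᶜ = 0)
    (P : ℕ → Polynomial ℝ) (b : ℕ → ℝ)
    (horth : ∀ n m, ∫ ω, (P n).eval ω * (P m).eval ω ∂μ = if n = m then 1 else 0)
    (hrec : ∀ n, 1 ≤ n → ∀ ω : ℝ,
      ω * (P n).eval ω = b (n + 1) * (P (n + 1)).eval ω + b n * (P (n - 1)).eval ω)
    (bb : ℝ) (hlim : Filter.Tendsto b Filter.atTop (nhds bb))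
    (q : Polynomial ℝ) :
    Filter.Tendsto (fun n => ∫ ω, q.eval ω * (P n).eval ω ^ 2 ∂μ) Filter.atTop
      (nhds ((1 / Real.pi) * ∫ θ in (0:ℝ)..Real.pi, q.eval (2 * bb * Real.cos θ))) := by
  have hint : ∀ g : ℝ → ℝ, Continuous g → Integrable g μ := integrable_of_cont μ c hsupp
  have hmono : ∀ i : ℕ, Filter.Tendsto
      (fun n : ℕ => ∫ ω, ω ^ i * ((P n).eval ω * (P n).eval ω) ∂μ) Filter.atTop
      (nhds ((1 / Real.pi) * ∫ θ in (0:ℝ)..Real.pi, (2 * bb * Real.cos θ) ^ i)) := by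
    intro i
    have h := Tlim μ c hsupp P b horth hrec bb hlim i 0
    have heq : ∀ n : ℕ, ((n : ℤ) + 0).toNat = n := by intro n; omega
    simp only [heq] at h
    have hval : bb ^ i * Aw i 0
        = (1 / Real.pi) * ∫ θ in (0:ℝ)..Real.pi, (2 * bb * Real.cos θ) ^ i := by
      unfold Aw
      rw [← mul_assoc, mul_comm (bb ^ i), mul_assoc, ← intervalIntegral.integral_const_mul]
      congr 1
      apply intervalIntegral.integral_congr
      intro θ _
      simp only [Int.cast_zero, zero_mul, Real.cos_zero, mul_one]
      rw [← mul_pow]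
      ring_nf
    rwa [hval] at h
  set m := q.natDegree + 1 with hm
  have hL : ∀ n : ℕ, ∫ ω, q.eval ω * (P n).eval ω ^ 2 ∂μ
      = ∑ i ∈ Finset.range m, q.coeff i * ∫ ω, ω ^ i * ((P n).eval ω * (P n).eval ω) ∂μ := by
    intro n
    have : ∀ ω : ℝ, q.eval ω * (P n).eval ω ^ 2
        = ∑ i ∈ Finset.range m, q.coeff i * (ω ^ i * ((P n).eval ω * (P n).eval ω)) := by
      intro ω
      rw [Polynomial.eval_eq_sum_range, Finset.sum_mul]
      apply Finset.sum_congr rfl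
      intro i _
      ring
    rw [integral_congr_ae (Filter.Eventually.of_forall this),
      MeasureTheory.integral_finset_sum]
    · exact Finset.sum_congr rfl fun i _ => MeasureTheory.integral_const_mul _ _
    · intro i _
      exact (hint _ ((continuous_pow i).mul (((P n).continuous).mul
        ((P n).continuous)))).const_mul _
  have hR : (1 / Real.pi) * ∫ θ in (0:ℝ)..Real.pi, q.eval (2 * bb * Real.cos θ)
      = ∑ i ∈ Finset.range m,
        q.coeff i * ((1 / Real.pi) * ∫ θ in (0:ℝ)..Real.pi, (2 * bb * Real.cos θ) ^ i) := by
    have : ∀ θ : ℝ, q.eval (2 * bb * Real.cos θ)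
        = ∑ i ∈ Finset.range m, q.coeff i * (2 * bb * Real.cos θ) ^ i := by
      intro θ
      rw [Polynomial.eval_eq_sum_range]
    rw [intervalIntegral.integral_congr (fun θ _ => this θ),
      intervalIntegral.integral_finset_sum]
    · rw [Finset.mul_sum]
      apply Finset.sum_congr rfl
      intro i _
      rw [intervalIntegral.integral_const_mul]
      ring
    · intro i _
      exact (Continuous.intervalIntegrable (by fun_prop) _ _).const_mul _
  simp only [hL, hR]
  exact tendsto_finset_sum _ fun i _ => (hmono i).const_mul _

theorem arcsine_weak_limit (μ : Measure ℝ) [IsProbabilityMeasure μ]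
    (hsymm : μ.map (fun ω => -ω) = μ)
    (c : ℝ) (hsupp : μ (Set.Icc (-c) c)ᶜ = 0)
    (P : ℕ → Polynomial ℝ) (b : ℕ → ℝ)
    (hdeg : ∀ n, (P n).natDegree = n)
    (hlead : ∀ n, 0 < (P n).leadingCoeff)
    (horth : ∀ n m, ∫ ω, (P n).eval ω * (P m).eval ω ∂μ = if n = m then 1 else 0)
    (hP0 : P 0 = 1)
    (hrec : ∀ n, 1 ≤ n → ∀ ω : ℝ,
      ω * (P n).eval ω = b (n + 1) * (P (n + 1)).eval ω + b n * (P (n - 1)).eval ω)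
    (hrec0 : ∀ ω : ℝ, ω * (P 0).eval ω = b 1 * (P 1).eval ω)
    (bb : ℝ) (hbb : 0 < bb)
    (hlim : Filter.Tendsto b Filter.atTop (nhds bb))
    (f : ℝ → ℝ) (hf : Continuous f) (hfb : ∃ C, ∀ x, |f x| ≤ C) :
    Filter.Tendsto (fun n => ∫ ω, f ω * (P n).eval ω ^ 2 ∂μ) Filter.atTop
      (nhds ((1 / Real.pi) *
        ∫ ω in Set.Ioo (-(2 * bb)) (2 * bb), f ω / Real.sqrt (4 * bb ^ 2 - ω ^ 2))) := by
  have hint : ∀ g : ℝ → ℝ, Continuous g → Integrable g μ := integrable_of_cont μ c hsupp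
  rw [cov_arcsine bb hbb f]
  set R := max c (2 * bb) with hR
  have hcR : c ≤ R := le_max_left _ _
  have h2bR : 2 * bb ≤ R := le_max_right _ _
  have hKae : ∀ᵐ ω ∂μ, ω ∈ Set.Icc (-c) c := by
    have hset : {a : ℝ | ¬ a ∈ Set.Icc (-c) c} = (Set.Icc (-c) c)ᶜ := rfl
    rw [MeasureTheory.ae_iff, hset]
    exact hsupp
  have hPn1 : ∀ n, ∫ ω, (P n).eval ω ^ 2 ∂μ = 1 := by
    intro n
    have := horth n n
    rw [if_pos rfl] at this
    rw [← this]
    exact MeasureTheory.integral_congr_ae (Filter.Eventually.of_forall fun ω => by ring)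
  rw [Metric.tendsto_atTop]
  intro ε hε
  obtain ⟨q, hq⟩ := exists_polynomial_near_of_continuousOn (-R) R f hf.continuousOn
    (ε/3) (by linarith)
  have hPq := Plim μ c hsupp P b horth hrec bb hlim q
  rw [Metric.tendsto_atTop] at hPq
  obtain ⟨N, hN⟩ := hPq (ε/3) (by linarith)
  refine ⟨N, fun n hn => ?_⟩
  set X := ∫ ω, f ω * (P n).eval ω ^ 2 ∂μ with hX
  set Y := ∫ ω, q.eval ω * (P n).eval ω ^ 2 ∂μ with hY
  set L := (1 / Real.pi) * ∫ θ in (0:ℝ)..Real.pi, f (2 * bb * Real.cos θ) with hLdef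
  set Lq := (1 / Real.pi) * ∫ θ in (0:ℝ)..Real.pi, q.eval (2 * bb * Real.cos θ) with hLqdef
  have hfint : Integrable (fun ω => f ω * (P n).eval ω ^ 2) μ :=
    hint _ (hf.mul (((P n).continuous).pow 2))
  have hqint : Integrable (fun ω => q.eval ω * (P n).eval ω ^ 2) μ :=
    hint _ ((q.continuous).mul (((P n).continuous).pow 2))
  have d1 : |X - Y| ≤ ε/3 := by
    rw [hX, hY, ← MeasureTheory.integral_sub hfint hqint]
    calc |∫ ω, (f ω * (P n).eval ω ^ 2 - q.eval ω * (P n).eval ω ^ 2) ∂μ|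
        ≤ ∫ ω, |f ω * (P n).eval ω ^ 2 - q.eval ω * (P n).eval ω ^ 2| ∂μ :=
          by
            have h := MeasureTheory.norm_integral_le_integral_norm (μ := μ)
              (fun ω => f ω * (P n).eval ω ^ 2 - q.eval ω * (P n).eval ω ^ 2)
            simpa [Real.norm_eq_abs] using h
      _ ≤ ∫ ω, (ε/3) * (P n).eval ω ^ 2 ∂μ := by
          apply MeasureTheory.integral_mono_ae
          · exact (hint _ ((hf.mul (((P n).continuous).pow 2)).sub
              ((q.continuous).mul (((P n).continuous).pow 2)))).abs
          · exact (hint _ (((P n).continuous).pow 2)).const_mul _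
          · filter_upwards [hKae] with ω hω
            have hmem : ω ∈ Set.Icc (-R) R := ⟨by linarith [hω.1], by linarith [hω.2]⟩
            have hb := hq ω hmem
            have : |f ω * (P n).eval ω ^ 2 - q.eval ω * (P n).eval ω ^ 2|
                = |f ω - q.eval ω| * (P n).eval ω ^ 2 := by
              rw [← sub_mul, abs_mul, abs_of_nonneg (sq_nonneg ((P n).eval ω))]
            rw [this]
            have h1 : |f ω - q.eval ω| ≤ ε/3 := by
              rw [abs_sub_comm]; exact hb.le
            nlinarith [sq_nonneg ((P n).eval ω)]
      _ = ε/3 := by rw [MeasureTheory.integral_const_mul, hPn1 n, mul_one]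
  have d3 : |Lq - L| ≤ ε/3 := by
    rw [hLqdef, hLdef, ← mul_sub, ← intervalIntegral.integral_sub
      (Continuous.intervalIntegrable (by fun_prop) _ _)
      (Continuous.intervalIntegrable (by fun_prop) _ _)]
    rw [abs_mul]
    have hπ : |1 / Real.pi| = 1 / Real.pi := abs_of_pos (by positivity)
    rw [hπ]
    have hbound : |∫ θ in (0:ℝ)..Real.pi,
        (q.eval (2 * bb * Real.cos θ) - f (2 * bb * Real.cos θ))| ≤ (ε/3) * |Real.pi - 0| := by
      rw [← Real.norm_eq_abs]
      apply intervalIntegral.norm_integral_le_of_norm_le_const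
      intro x hx
      have hmem : 2 * bb * Real.cos x ∈ Set.Icc (-R) R := by
        have := Real.neg_one_le_cos x
        have := Real.cos_le_one x
        constructor <;> nlinarith
      have := hq _ hmem
      rw [Real.norm_eq_abs]
      exact this.le
    have : (1 / Real.pi) * |∫ θ in (0:ℝ)..Real.pi,
        (q.eval (2 * bb * Real.cos θ) - f (2 * bb * Real.cos θ))|
        ≤ (1 / Real.pi) * ((ε/3) * |Real.pi - 0|) := by
      apply mul_le_mul_of_nonneg_left hbound (by positivity)
    calc (1 / Real.pi) * |∫ θ in (0:ℝ)..Real.pi,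
        (q.eval (2 * bb * Real.cos θ) - f (2 * bb * Real.cos θ))|
        ≤ (1 / Real.pi) * ((ε/3) * |Real.pi - 0|) := this
      _ = ε/3 := by
          rw [sub_zero, abs_of_pos Real.pi_pos]
          field_simp
  have d2 : |Y - Lq| < ε/3 := by
    have := hN n hn
    rwa [Real.dist_eq] at this
  rw [Real.dist_eq]
  calc |X - L| ≤ |X - Y| + |Y - L| := abs_sub_le _ _ _
    _ ≤ |X - Y| + (|Y - Lq| + |Lq - L|) := by linarith [abs_sub_le Y Lq L]
    _ < ε := by linarith
end

section
/- For the Gaussian Unitary Ensemble of N×N matrices, the ensemble-averaged Lanczos coefficients are b_n = √(2/N) · Γ(N − n + 1/2)/Γ(N − n), and in the double scaling limit N, n → ∞ with n/N = t fixed, 0 < t < 1, one has b_n → √2 · √(1 − t). -/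
/-!
Log-convexity of `Γ` gives `Γ((s + t) / 2) ≤ √(Γ s Γ t)`. Applied to the pairs `(x, x + 1)` and
`(x + 1/2, x + 3/2)` together with `Γ (y + 1) = y Γ y`, it squeezes `Γ (x + 1/2) / Γ x` between
`x / √(x + 1/2)` and `√x`, so `Γ (x + 1/2) / Γ x ~ √x`. Since `N - ⌊tN⌋ ~ (1 - t) N`, the
coefficient is asymptotic to `√(2/N) · √((1 - t) N) = √2 · √(1 - t)`.
-/

open Real Filter Topology Asymptotics

theorem tendsto_div_add_const_atTop (c : ℝ) :
    Tendsto (fun x : ℝ => x / (x + c)) atTop (𝓝 1) := by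
  have h : Tendsto (fun x : ℝ => (1 + c / x)⁻¹) atTop (𝓝 (1 + 0)⁻¹) :=
    ((tendsto_const_nhds.div_atTop tendsto_id).const_add 1).inv₀ (by norm_num)
  rw [add_zero, inv_one] at h
  refine h.congr' ?_
  filter_upwards [eventually_gt_atTop 0] with x hx
  field_simp

namespace Real

theorem Gamma_midpoint_le_sqrt_mul {s t : ℝ} (hs : 0 < s) (ht : 0 < t) :
    Gamma ((s + t) / 2) ≤ √(Gamma s * Gamma t) := by
  have h := Gamma_mul_add_mul_le_rpow_Gamma_mul_rpow_Gamma hs ht (a := 1 / 2) (b := 1 / 2)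
    one_half_pos one_half_pos (by norm_num)
  rw [sqrt_eq_rpow, mul_rpow (Gamma_pos_of_pos hs).le (Gamma_pos_of_pos ht).le]
  convert h using 2
  ring

theorem Gamma_add_half_le {x : ℝ} (hx : 0 < x) : Gamma (x + 1 / 2) ≤ √x * Gamma x := by
  have h := Gamma_midpoint_le_sqrt_mul hx (by positivity : 0 < x + 1)
  rwa [Gamma_add_one hx.ne', ← mul_assoc, mul_comm _ x, mul_assoc, sqrt_mul hx.le,
    sqrt_mul_self (Gamma_pos_of_pos hx).le, show (x + (x + 1)) / 2 = x + 1 / 2 by ring] at h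

theorem mul_Gamma_le_Gamma_add_half {x : ℝ} (hx : 0 < x) :
    x * Gamma x ≤ √(x + 1 / 2) * Gamma (x + 1 / 2) := by
  have hx' : 0 < x + 1 / 2 := by positivity
  have h := Gamma_midpoint_le_sqrt_mul hx' (by positivity : 0 < x + 3 / 2)
  rwa [show x + 3 / 2 = x + 1 / 2 + 1 by ring, Gamma_add_one hx'.ne', ← mul_assoc,
    mul_comm _ (x + 1 / 2), mul_assoc, sqrt_mul hx'.le, sqrt_mul_self (Gamma_pos_of_pos hx').le,
    show (x + 1 / 2 + (x + 1 / 2 + 1)) / 2 = x + 1 by ring, Gamma_add_one hx.ne'] at h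

theorem Gamma_add_half_div_Gamma_isEquivalent_sqrt :
    (fun x => Gamma (x + 1 / 2) / Gamma x) ~[atTop] fun x => √x := by
  refine isEquivalent_of_tendsto_one ?_
  have hlow : Tendsto (fun x : ℝ => √(x / (x + 1 / 2))) atTop (𝓝 1) := by
    simpa using (tendsto_div_add_const_atTop (1 / 2)).sqrt
  refine tendsto_of_tendsto_of_tendsto_of_le_of_le' hlow tendsto_const_nhds ?_ ?_
  · filter_upwards [eventually_gt_atTop 0] with x hx
    rw [Pi.div_apply, sqrt_div' _ (by positivity : 0 ≤ x + 1 / 2),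
      div_le_div_iff₀ (by positivity) (by positivity), div_mul_eq_mul_div,
      le_div_iff₀ (Gamma_pos_of_pos hx), mul_self_sqrt hx.le]
    linarith [mul_Gamma_le_Gamma_add_half hx]
  · filter_upwards [eventually_gt_atTop 0] with x hx
    rw [Pi.div_apply, div_le_one (sqrt_pos.2 hx), div_le_iff₀ (Gamma_pos_of_pos hx)]
    exact Gamma_add_half_le hx

end Real

theorem tendsto_sub_nat_floor_mul_div_atTop {t : ℝ} (ht : 0 ≤ t) :
    Tendsto (fun N : ℕ => ((N : ℝ) - ⌊t * N⌋₊) / N) atTop (𝓝 (1 - t)) := by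
  have h := (tendsto_nat_floor_mul_div_atTop ht).comp tendsto_natCast_atTop_atTop
  refine (tendsto_const_nhds.sub h).congr' ?_
  filter_upwards [eventually_ne_atTop 0] with N hN
  simp [sub_div, div_self (Nat.cast_ne_zero.2 hN : (N : ℝ) ≠ 0)]

theorem tendsto_sub_nat_floor_mul_atTop {t : ℝ} (ht : t < 1) :
    Tendsto (fun N : ℕ => (N : ℝ) - ⌊t * N⌋₊) atTop atTop := by
  rcases le_or_gt 0 t with ht0 | ht0
  · have h := (tendsto_natCast_atTop_atTop (R := ℝ)).const_mul_atTop (sub_pos.2 ht)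
    refine tendsto_atTop_mono (fun N => ?_) h
    linarith [Nat.floor_le (mul_nonneg ht0 N.cast_nonneg)]
  · refine tendsto_natCast_atTop_atTop.congr fun N => ?_
    have hfloor : ⌊t * N⌋₊ = 0 :=
      Nat.floor_eq_zero.2 ((mul_nonpos_of_nonpos_of_nonneg ht0.le N.cast_nonneg).trans_lt one_pos)
    simp [hfloor]

theorem gue_lanczos_double_scaling (t : ℝ) (ht0 : 0 < t) (ht1 : t < 1) :
    Filter.Tendsto
      (fun N : ℕ => Real.sqrt (2 / (N : ℝ)) *
        Real.Gamma ((N : ℝ) - (⌊t * (N : ℝ)⌋₊ : ℝ) + 1 / 2) /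
        Real.Gamma ((N : ℝ) - (⌊t * (N : ℝ)⌋₊ : ℝ)))
      Filter.atTop (nhds (Real.sqrt 2 * Real.sqrt (1 - t))) := by
  have hΓ := Real.Gamma_add_half_div_Gamma_isEquivalent_sqrt.comp_tendsto
    (tendsto_sub_nat_floor_mul_atTop ht1)
  have hequiv := (IsEquivalent.refl (u := fun N : ℕ => √(2 / N))).mul hΓ
  have hlim : Tendsto (fun N : ℕ => √(2 / N) * √((N : ℝ) - ⌊t * N⌋₊)) atTop
      (𝓝 (√2 * √(1 - t))) := by
    rw [← sqrt_mul zero_le_two]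
    refine (((tendsto_sub_nat_floor_mul_div_atTop ht0.le).const_mul 2).sqrt).congr fun N => ?_
    rw [← sqrt_mul (by positivity)]
    ring_nf
  exact (hequiv.symm.tendsto_nhds hlim).congr fun N => (mul_div_assoc _ _ _).symm
end
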